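/- With the notation of the Haar wavelet expansion of an empirical distribution, the Wasserstein-1 distance between the reconstructed cdf F*_J and the empirical cdf F satisfies W(F*_J, F) = ∫₀¹ |F*_J(x) − F(x)| dx ≤ 2^{−(J+1)}. -/

import Mathlib

open MeasureTheory Finset

/-- The Haar wavelet function `ψ_{jk}(t) = 2^{j/2} ψ(2^j t - k)`. -/
noncomputable def haar (j k : ℕ) (t : ℝ) : ℝ :=
  if (k : ℝ) / 2 ^ j ≤ t ∧ t < ((k : ℝ) + 1 / 2) / 2 ^ j then (2 : ℝ) ^ ((j : ℝ) / 2)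
  else if ((k : ℝ) + 1 / 2) / 2 ^ j ≤ t ∧ t < ((k : ℝ) + 1) / 2 ^ j then
    -(2 : ℝ) ^ ((j : ℝ) / 2)
  else 0

/-- The empirical cdf of samples `X₁,…,Xₙ` (ties at dyadic points handled by the strict
inequality convention, samples in `[0,1)`). -/
noncomputable def empCdf (n : ℕ) (X : Fin n → ℝ) (x : ℝ) : ℝ :=
  (1 / n) * ∑ i, (if X i < x then (1 : ℝ) else 0)

/-- Empirical wavelet coefficient `a*_{jk} = (1/n) Σᵢ ψ_{jk}(Xᵢ)`. -/
noncomputable def empCoef (n : ℕ) (X : Fin n → ℝ) (j k : ℕ) : ℝ :=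
  (1 / n) * ∑ i, haar j k (X i)

/-- The `J`-th order wavelet expansion `f*_J` of the empirical distribution. -/
noncomputable def waveletPdf (n : ℕ) (X : Fin n → ℝ) (J : ℕ) (x : ℝ) : ℝ :=
  1 + ∑ j ∈ range (J + 1), ∑ k ∈ range (2 ^ j), empCoef n X j k * haar j k x

/-!
Write `s ~ⱼ t` when `s` and `t` lie in the same cell of the dyadic grid of mesh `2^{-j}`.
On `[0, 1)` the Haar functions of level `j` satisfy
`Σₖ ψ_{jk}(s) ψ_{jk}(t) = 2^{j+1} 1(s ~_{j+1} t) - 2^j 1(s ~ⱼ t)`, so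
`1 + Σ_{j ≤ J} Σₖ ψ_{jk}(s) ψ_{jk}(t)` telescopes to `2^{J+1} 1(s ~_{J+1} t)`. Hence `f*_J` is the
average over the samples of the uniform density on the cell of `Xᵢ`, and `F*_J - F` is the average
of the differences between the cdf of that uniform law and the step `1(Xᵢ < x)`. Each difference
lies in `[-1, 1]` and vanishes outside the open cell of `Xᵢ`, whose length is `2^{-(J+1)}`.
-/

noncomputable def dyadicFloor (L : ℕ) (s : ℝ) : ℝ := ⌊2 ^ L * s⌋ / 2 ^ L

def dyadicCell (L : ℕ) (s : ℝ) : Set ℝ := Set.Ico (dyadicFloor L s) (dyadicFloor L s + 1 / 2 ^ L)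

noncomputable def dyadicKernel (L : ℕ) (s t : ℝ) : ℝ :=
  if ⌊2 ^ L * s⌋ = ⌊2 ^ L * t⌋ then 2 ^ L else 0

section DyadicCell

variable {L : ℕ} {s t : ℝ}

lemma mem_dyadicCell_iff : t ∈ dyadicCell L s ↔ ⌊2 ^ L * s⌋ = ⌊2 ^ L * t⌋ := by
  have h2L : (0 : ℝ) < 2 ^ L := by positivity
  rw [dyadicCell, dyadicFloor, ← add_div, Set.mem_Ico, div_le_iff₀ h2L, lt_div_iff₀ h2L,
    eq_comm, Int.floor_eq_iff, mul_comm t]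

lemma self_mem_dyadicCell : s ∈ dyadicCell L s := mem_dyadicCell_iff.2 rfl

lemma dyadicFloor_nonneg (hs : 0 ≤ s) : 0 ≤ dyadicFloor L s := by
  have : (0 : ℤ) ≤ ⌊2 ^ L * s⌋ := Int.floor_nonneg.2 (by positivity)
  unfold dyadicFloor
  positivity

lemma volume_real_dyadicCell : (volume : Measure ℝ).real (dyadicCell L s) = 1 / 2 ^ L := by
  rw [dyadicCell, Real.volume_real_Ico_of_le (by simp), add_sub_cancel_left]

lemma dyadicKernel_eq_indicator :
    dyadicKernel L s = (dyadicCell L s).indicator fun _ ↦ 2 ^ L := by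
  ext t
  simp only [dyadicKernel, Set.indicator, mem_dyadicCell_iff]

lemma dyadicKernel_zero (hs : s ∈ Set.Ico 0 1) (ht : t ∈ Set.Ico 0 1) : dyadicKernel 0 s t = 1 := by
  simp [dyadicKernel, Int.floor_eq_zero_iff.2 hs, Int.floor_eq_zero_iff.2 ht]

end DyadicCell

lemma floor_two_pow_mul_eq_div (L : ℕ) (s : ℝ) : ⌊2 ^ L * s⌋ = ⌊2 ^ (L + 1) * s⌋ / 2 := by
  have h := Int.floor_div_natCast (2 ^ (L + 1) * s) 2
  push_cast at h
  rw [← h, pow_succ]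
  ring_nf

lemma floor_two_pow_mul_mem_Ico (L : ℕ) {s : ℝ} (hs : s ∈ Set.Ico 0 1) :
    ⌊2 ^ L * s⌋ ∈ Set.Ico 0 (2 ^ L) := by
  refine ⟨Int.floor_nonneg.2 (by have := hs.1; positivity), Int.floor_lt.2 ?_⟩
  push_cast
  exact mul_lt_of_lt_one_right (by positivity) hs.2

lemma haar_eq_ite (L k : ℕ) (s : ℝ) :
    haar L k s =
      if ⌊2 ^ (L + 1) * s⌋ = 2 * k then (2 : ℝ) ^ ((L : ℝ) / 2)
      else if ⌊2 ^ (L + 1) * s⌋ = 2 * k + 1 then -(2 : ℝ) ^ ((L : ℝ) / 2) else 0 := by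
  have h2L : (0 : ℝ) < 2 ^ L := by positivity
  have hfloor (m : ℤ) (a : ℝ) (ha : (m : ℝ) = 2 * a) :
      ⌊2 ^ (L + 1) * s⌋ = m ↔ a / 2 ^ L ≤ s ∧ s < (a + 1 / 2) / 2 ^ L := by
    rw [Int.floor_eq_iff, div_le_iff₀ h2L, lt_div_iff₀ h2L, pow_succ, ha]
    constructor <;> rintro ⟨h₁, h₂⟩ <;> constructor <;> linarith
  have hleft := hfloor (2 * k) k (by push_cast; ring)
  have hright := hfloor (2 * k + 1) (k + 1 / 2) (by push_cast; ring)
  rw [add_assoc, add_halves] at hright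
  simp only [haar, hleft, hright]

lemma rpow_half_mul_self (L : ℕ) : (2 : ℝ) ^ ((L : ℝ) / 2) * 2 ^ ((L : ℝ) / 2) = 2 ^ L := by
  rw [← Real.rpow_add two_pos, add_halves, Real.rpow_natCast]

lemma sum_haar_mul_haar (L : ℕ) {s t : ℝ} (hs : s ∈ Set.Ico 0 1) :
    ∑ k ∈ range (2 ^ L), haar L k s * haar L k t =
      dyadicKernel (L + 1) s t - dyadicKernel L s t := by
  obtain ⟨hp₀, hp₁⟩ := floor_two_pow_mul_mem_Ico L hs
  simp only [haar_eq_ite, dyadicKernel, floor_two_pow_mul_eq_div L] at hp₀ hp₁ ⊢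
  set p := ⌊2 ^ (L + 1) * s⌋
  set q := ⌊2 ^ (L + 1) * t⌋
  -- only the index `k = ⌊2^L s⌋ = p / 2` can contribute
  have hk₀ : (p / 2).toNat ∈ range (2 ^ L) := by
    rw [mem_range, ← Nat.cast_lt (α := ℤ)]
    push_cast
    omega
  have hk₀p : ((p / 2).toNat : ℤ) = p / 2 := Int.toNat_of_nonneg hp₀
  have hc := rpow_half_mul_self L
  rw [sum_eq_single_of_mem _ hk₀ fun k _ hk ↦ ?_]
  · rw [hk₀p]
    split_ifs <;>
      first
        | (exfalso; omega)
        | ring1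
        | (simp only [mul_neg, neg_mul, neg_neg, hc, pow_succ]; ring1)
  · have hk' : (k : ℤ) ≠ p / 2 := fun h ↦ hk (by omega)
    split_ifs <;> first | ring1 | (exfalso; omega)

lemma one_add_sum_sum_haar_mul_haar (L : ℕ) {s t : ℝ} (hs : s ∈ Set.Ico 0 1)
    (ht : t ∈ Set.Ico 0 1) :
    1 + ∑ j ∈ range L, ∑ k ∈ range (2 ^ j), haar j k s * haar j k t = dyadicKernel L s t := by
  simp only [sum_haar_mul_haar _ hs, sum_range_sub (dyadicKernel · s t), dyadicKernel_zero hs ht]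
  ring

section DyadicKernelIntegral

variable {L : ℕ} {s : ℝ}

lemma intervalIntegrable_dyadicKernel (a b : ℝ) :
    IntervalIntegrable (dyadicKernel L s) volume a b := by
  rw [dyadicKernel_eq_indicator]
  have hc : IntervalIntegrable (fun _ ↦ (2 : ℝ) ^ L) volume a b := intervalIntegrable_const
  exact ⟨hc.1.indicator measurableSet_Ico, hc.2.indicator measurableSet_Ico⟩

lemma integral_dyadicKernel (hs : 0 ≤ s) {x : ℝ} (hx : 0 ≤ x) :
    ∫ t in (0 : ℝ)..x, dyadicKernel L s t =
      2 ^ L * max (min x (dyadicFloor L s + 1 / 2 ^ L) - dyadicFloor L s) 0 := by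
  have hcell : dyadicCell L s =ᵐ[volume]
      Set.Ioc (dyadicFloor L s) (dyadicFloor L s + 1 / 2 ^ L) := Ico_ae_eq_Ioc
  rw [intervalIntegral.integral_of_le hx, dyadicKernel_eq_indicator,
    integral_congr_ae (ae_restrict_of_ae (indicator_ae_eq_of_ae_eq_set hcell)),
    setIntegral_indicator measurableSet_Ioc, setIntegral_const, Set.Ioc_inter_Ioc,
    Real.volume_real_Ioc, smul_eq_mul, max_eq_right (dyadicFloor_nonneg hs), max_comm]
  ring

lemma abs_integral_dyadicKernel_sub_le (hs : 0 ≤ s) {x : ℝ} (hx : 0 ≤ x) :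
    |(∫ t in (0 : ℝ)..x, dyadicKernel L s t) - if s < x then 1 else 0| ≤
      (interior (dyadicCell L s)).indicator 1 x := by
  obtain ⟨has, hsb⟩ : s ∈ dyadicCell L s := self_mem_dyadicCell
  rw [integral_dyadicKernel hs hx, dyadicCell, interior_Ico]
  set a := dyadicFloor L s
  have h2L : (0 : ℝ) < 2 ^ L := by positivity
  have hlen : 2 ^ L * (a + 1 / 2 ^ L - a) = (1 : ℝ) := by field_simp; ring
  by_cases hxa : x ≤ a
  · rw [min_eq_left (by linarith), max_eq_right (by linarith), if_neg (by linarith), mul_zero,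
      sub_zero, abs_zero]
    exact Set.indicator_nonneg (fun _ _ ↦ zero_le_one) x
  by_cases hxb : a + 1 / 2 ^ L ≤ x
  · rw [min_eq_right hxb, max_eq_left (by linarith), hlen, if_pos (by linarith), sub_self,
      abs_zero]
    exact Set.indicator_nonneg (fun _ _ ↦ zero_le_one) x
  rw [not_le] at hxa hxb
  rw [Set.indicator_of_mem (Set.mem_Ioo.2 ⟨hxa, hxb⟩), Pi.one_apply, min_eq_left hxb.le,
    max_eq_left (by linarith)]
  have h₀ : 0 ≤ 2 ^ L * (x - a) := by positivity
  have h₁ : 2 ^ L * (x - a) ≤ 1 := hlen ▸ by gcongr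
  rw [abs_le]
  split_ifs <;> constructor <;> linarith

lemma intervalIntegrable_indicator_interior_dyadicCell (a b : ℝ) :
    IntervalIntegrable ((interior (dyadicCell L s)).indicator (1 : ℝ → ℝ)) volume a b := by
  have hc : IntervalIntegrable (1 : ℝ → ℝ) volume a b := intervalIntegrable_const
  exact ⟨hc.1.indicator isOpen_interior.measurableSet,
    hc.2.indicator isOpen_interior.measurableSet⟩

lemma integral_indicator_interior_dyadicCell_le {a b : ℝ} (hab : a ≤ b) :
    ∫ x in a..b, (interior (dyadicCell L s)).indicator (1 : ℝ → ℝ) x ≤ 1 / 2 ^ L := by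
  rw [intervalIntegral.integral_of_le hab, integral_indicator_one isOpen_interior.measurableSet,
    measureReal_restrict_apply isOpen_interior.measurableSet, ← volume_real_dyadicCell (s := s)]
  exact measureReal_mono (Set.inter_subset_left.trans interior_subset)
    (by rw [dyadicCell, Real.volume_Ico]; exact ENNReal.ofReal_ne_top)

end DyadicKernelIntegral

section WaveletPdf

variable {n : ℕ} {X : Fin n → ℝ} (J : ℕ)

lemma waveletPdf_eq_sum_dyadicKernel (hn : n ≠ 0) (hX : ∀ i, X i ∈ Set.Ico (0 : ℝ) 1) {t : ℝ}
    (ht : t ∈ Set.Ico (0 : ℝ) 1) :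
    waveletPdf n X J t = (1 / n) * ∑ i, dyadicKernel (J + 1) (X i) t := by
  simp only [← one_add_sum_sum_haar_mul_haar (J + 1) (hX _) ht, sum_add_distrib, sum_const,
    card_univ, Fintype.card_fin, nsmul_eq_mul, mul_one, mul_add, waveletPdf, empCoef, mul_sum,
    sum_mul]
  rw [one_div_mul_cancel (Nat.cast_ne_zero.2 hn)]
  conv_rhs => rw [sum_comm]
  refine congrArg _ (sum_congr rfl fun j _ ↦ ?_)
  conv_rhs => rw [sum_comm]
  simp only [mul_assoc]

lemma integral_waveletPdf (hn : n ≠ 0) (hX : ∀ i, X i ∈ Set.Ico (0 : ℝ) 1) {x : ℝ}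
    (hx : x ∈ Set.Icc (0 : ℝ) 1) :
    ∫ t in (0 : ℝ)..x, waveletPdf n X J t =
      (1 / n) * ∑ i, ∫ t in (0 : ℝ)..x, dyadicKernel (J + 1) (X i) t := by
  rw [← intervalIntegral.integral_finsetSum fun i _ ↦ intervalIntegrable_dyadicKernel _ _,
    ← intervalIntegral.integral_const_mul, intervalIntegral.integral_of_le hx.1,
    intervalIntegral.integral_of_le hx.1, integral_Ioc_eq_integral_Ioo,
    integral_Ioc_eq_integral_Ioo]
  refine setIntegral_congr_fun measurableSet_Ioo fun t ht ↦ ?_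
  exact waveletPdf_eq_sum_dyadicKernel J hn hX ⟨ht.1.le, ht.2.trans_le hx.2⟩

lemma abs_integral_waveletPdf_sub_empCdf_le (hn : n ≠ 0) (hX : ∀ i, X i ∈ Set.Ico (0 : ℝ) 1)
    {x : ℝ} (hx : x ∈ Set.Icc (0 : ℝ) 1) :
    |(∫ t in (0 : ℝ)..x, waveletPdf n X J t) - empCdf n X x| ≤
      (1 / n) * ∑ i, (interior (dyadicCell (J + 1) (X i))).indicator 1 x := by
  rw [integral_waveletPdf J hn hX hx, empCdf, ← mul_sub, ← sum_sub_distrib, abs_mul,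
    abs_of_nonneg (by positivity)]
  gcongr
  refine (abs_sum_le_sum_abs _ _).trans (sum_le_sum fun i _ ↦ ?_)
  exact abs_integral_dyadicKernel_sub_le (hX i).1 hx.1

end WaveletPdf

/-- The Wasserstein-1 distance between the cdf reconstructed from the `J`-th order Haar
wavelet expansion and the empirical cdf is at most `2^{-(J+1)}`. -/
theorem wasserstein_waveletCdf_empCdf_le (n : ℕ) (hn : 0 < n) (J : ℕ) (X : Fin n → ℝ)
    (hX : ∀ i, X i ∈ Set.Ico (0 : ℝ) 1) :
    (∫ x in (0 : ℝ)..1,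
        |(∫ t in (0 : ℝ)..x, waveletPdf n X J t) - empCdf n X x|) ≤ 1 / 2 ^ (J + 1) := by
  set cellIndicator := fun i ↦ (interior (dyadicCell (J + 1) (X i))).indicator (1 : ℝ → ℝ)
  have hcell (i : Fin n) : IntervalIntegrable (cellIndicator i) volume 0 1 :=
    intervalIntegrable_indicator_interior_dyadicCell _ _
  calc (∫ x in (0 : ℝ)..1, |(∫ t in (0 : ℝ)..x, waveletPdf n X J t) - empCdf n X x|)
      ≤ ∫ x in (0 : ℝ)..1, (1 / n) * ∑ i, cellIndicator i x := by
        rw [intervalIntegral.integral_of_le zero_le_one,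
          intervalIntegral.integral_of_le zero_le_one]
        refine setIntegral_mono_of_nonneg (fun _ _ ↦ abs_nonneg _) (fun x hx ↦
          abs_integral_waveletPdf_sub_empCdf_le J hn.ne' hX (Set.Ioc_subset_Icc_self hx)) ?_
        simpa only [Finset.sum_apply] using
          ((IntervalIntegrable.sum univ fun i _ ↦ hcell i).const_mul _).1
    _ = (1 / n) * ∑ i, ∫ x in (0 : ℝ)..1, cellIndicator i x := by
        rw [intervalIntegral.integral_const_mul,
          intervalIntegral.integral_finsetSum fun i _ ↦ hcell i]
    _ ≤ (1 / n) * ∑ _i : Fin n, 1 / 2 ^ (J + 1) := by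
        gcongr with i
        exact integral_indicator_interior_dyadicCell_le zero_le_one
    _ = 1 / 2 ^ (J + 1) := by
        rw [sum_const, card_univ, Fintype.card_fin, nsmul_eq_mul]
        field_simp
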